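/- Suppose a hierarchical family of partitions {P_t} of X and a sorted sequence of pairs e_1,...,e_k with d(e_1) ≤ ... ≤ d(e_k) satisfy |E_t Δ E(P_t)| ≤ 4|B(G_t)| for all t, where E_t = {e_1,...,e_t}, G_t = (X, E_t), and E(P_t) is the set of within-cluster pairs of P_t. Define d_U(x,y) = d(e_j) for j the minimal t at which x,y lie in the same cluster of P_t. Then ||d - d_U||_1 = ∫_0^∞ |E_s Δ E(P_s)| ds ≤ 4 ∫_0^∞ |B(G_s)| ds = 4 Σ_{triples} tp(d;x,y,z), where E_s = E_t and P_s = P_t for d(e_t) ≤ s < d(e_{t+1}). -/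

import Mathlib

/-!
For a pair `x ≠ y`, the edge lies in `E_s` iff `d x y ≤ s` and in `E(P_s)` iff `dU x y ≤ s`, so it
lies in `E_s Δ E(P_s)` exactly for `s ∈ [min (d x y) (dU x y), max (d x y) (dU x y))`; likewise a
triple is a bad triangle of `G_s` exactly for `s` between the median and the maximum of its three
distances, and `max - median` is the three point condition. Integrating these indicators over `s`
gives the two equalities, and the hypothesis at `t = t(s)` integrates to the inequality.
-/

noncomputable section

open MeasureTheory
open scoped Classical

variable {X : Type*} [Fintype X] [DecidableEq X] {k : ℕ}

/-- One term of the three point condition. -/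
def tpt (d : X → X → ℝ) (x y z : X) : ℝ := d x z - max (d x y) (d y z)

/-- Three point condition: max over all permutations of `x,y,z`. -/
def tp (d : X → X → ℝ) (x y z : X) : ℝ :=
  max (max (max (tpt d x y z) (tpt d x z y)) (max (tpt d y x z) (tpt d y z x)))
      (max (tpt d z x y) (tpt d z y x))

/-- `(x,y) ∈ E_t = {e_1, …, e_t}` (0-based: the first `t` edges of the enumeration `e`). -/
def inE (e : Fin k → X × X) (t : ℕ) (x y : X) : Prop :=
  ∃ i : Fin k, (i : ℕ) < t ∧ (e i = (x, y) ∨ e i = (y, x))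

/-- Number of ordered pairs in the symmetric difference `E_t Δ E(P)` for a partition given
as the relation `P` (each unordered pair is counted twice). -/
def disCard (e : Fin k → X × X) (P : X → X → Prop) (t : ℕ) : ℕ :=
  (Finset.univ.filter (fun p : X × X => p.1 ≠ p.2 ∧
    ((inE e t p.1 p.2 ∧ ¬ P p.1 p.2) ∨ (¬ inE e t p.1 p.2 ∧ P p.1 p.2)))).card

/-- Number of ordered bad triangles of `G_t = (X, E_t)` (each unordered one counted 6 times). -/
def badCardE (e : Fin k → X × X) (t : ℕ) : ℕ :=
  (Finset.univ.filter (fun p : X × X × X =>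
    p.1 ≠ p.2.1 ∧ p.2.1 ≠ p.2.2 ∧ p.1 ≠ p.2.2 ∧
    ((if inE e t p.1 p.2.1 then 1 else 0) + (if inE e t p.2.1 p.2.2 then 1 else 0) +
      (if inE e t p.2.2 p.1 then 1 else 0) = (2 : ℕ)))).card

/-- Number of ordered bad triangles of the `s`-neighbor graph `G_s`. -/
def badCard (d : X → X → ℝ) (s : ℝ) : ℕ :=
  (Finset.univ.filter (fun p : X × X × X =>
    p.1 ≠ p.2.1 ∧ p.2.1 ≠ p.2.2 ∧ p.1 ≠ p.2.2 ∧
    ((if d p.1 p.2.1 ≤ s then 1 else 0) + (if d p.2.1 p.2.2 ≤ s then 1 else 0) +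
      (if d p.2.2 p.1 ≤ s then 1 else 0) = (2 : ℕ)))).card

/-- The step index `t(s)`: the number of edges `e_i` with `d(e_i) ≤ s`, so that
`E_s = E_{t(s)}` and `P_s = P_{t(s)}` when the enumeration is sorted by distance. -/
def tIdx (d : X → X → ℝ) (e : Fin k → X × X) (s : ℝ) : Fin (k + 1) :=
  ⟨(Finset.univ.filter (fun i : Fin k => d (e i).1 (e i).2 ≤ s)).card,
    Nat.lt_succ_of_le (le_trans (Finset.card_filter_le _ _) (by simp))⟩

open Finset

def median (a b c : ℝ) : ℝ := max (min a b) (max (min a c) (min b c))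

lemma median_le_max (a b c : ℝ) : median a b c ≤ max a (max b c) := by
  unfold median; grind

/-- The left side is `tp d x y z` written with `a = d x y`, `b = d y z`, `c = d x z`. -/
lemma max_sub_max_eq_max_sub_median (a b c : ℝ) :
    max (max (max (c - max a b) (a - max c b)) (max (b - max a c) (a - max b c)))
      (max (b - max c a) (c - max b a)) = max a (max b c) - median a b c := by
  unfold median; grind

lemma median_nonneg {a b : ℝ} (c : ℝ) (ha : 0 ≤ a) (hb : 0 ≤ b) : 0 ≤ median a b c :=
  le_max_of_le_left (le_min ha hb)

lemma tp_eq_max_sub_median {α : Type*} {d : α → α → ℝ} (hsym : ∀ x y, d x y = d y x)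
    (x y z : α) :
    tp d x y z = max (d x y) (max (d y z) (d z x)) - median (d x y) (d y z) (d z x) := by
  simp only [tp, tpt, hsym y x, hsym z y, hsym x z]
  exact max_sub_max_eq_max_sub_median _ _ _

lemma le_xor_le_iff_mem_Ico (a b s : ℝ) :
    ((a ≤ s ∧ ¬ b ≤ s) ∨ (¬ a ≤ s ∧ b ≤ s)) ↔ s ∈ Set.Ico (min a b) (max a b) := by
  by_cases ha : a ≤ s <;> by_cases hb : b ≤ s <;> simp_all

lemma two_of_three_le_iff_mem_Ico (a b c s : ℝ) :
    ((if a ≤ s then 1 else 0) + (if b ≤ s then 1 else 0) + (if c ≤ s then 1 else 0) = (2 : ℕ)) ↔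
      s ∈ Set.Ico (median a b c) (max a (max b c)) := by
  unfold median
  split_ifs <;> simp_all

lemma setIntegral_Ioi_zero_indicator_Ico {a b : ℝ} (ha : 0 ≤ a) (hab : a ≤ b) :
    ∫ s in Set.Ioi 0, (Set.Ico a b).indicator 1 s = b - a := by
  rw [setIntegral_congr_set Ioi_ae_eq_Ici, integral_indicator_one measurableSet_Ico,
    measureReal_restrict_apply measurableSet_Ico,
    Set.inter_eq_left.mpr fun s hs => Set.mem_Ici.mpr (ha.trans hs.1),
    Real.volume_real_Ico_of_le hab]

lemma integrableOn_indicator_Ico (a b : ℝ) (T : Set ℝ) :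
    IntegrableOn ((Set.Ico a b).indicator (1 : ℝ → ℝ)) T :=
  ((integrable_indicator_iff measurableSet_Ico).2
    (integrableOn_const measure_Ico_lt_top.ne)).integrableOn

section LayerCake

variable {ι : Type*} (S : Finset ι) (a b : ι → ℝ)

lemma card_filter_mem_Ico_eq_sum_indicator (s : ℝ) :
    (#{i ∈ S | s ∈ Set.Ico (a i) (b i)} : ℝ) = ∑ i ∈ S, (Set.Ico (a i) (b i)).indicator 1 s := by
  rw [card_filter, Nat.cast_sum]
  simp only [Set.indicator_apply, Nat.cast_ite, Nat.cast_one, Nat.cast_zero, Pi.one_apply]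

lemma integrableOn_card_filter_mem_Ico (T : Set ℝ) :
    IntegrableOn (fun s => (#{i ∈ S | s ∈ Set.Ico (a i) (b i)} : ℝ)) T := by
  simp_rw [card_filter_mem_Ico_eq_sum_indicator]
  exact integrable_finsetSum _ fun i _ => integrableOn_indicator_Ico _ _ _

lemma integral_card_filter_mem_Ico (ha : ∀ i ∈ S, 0 ≤ a i) (hab : ∀ i ∈ S, a i ≤ b i) :
    ∫ s in Set.Ioi 0, (#{i ∈ S | s ∈ Set.Ico (a i) (b i)} : ℝ) = ∑ i ∈ S, (b i - a i) := by
  simp_rw [card_filter_mem_Ico_eq_sum_indicator]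
  rw [integral_finsetSum _ fun i _ => integrableOn_indicator_Ico _ _ _]
  exact sum_congr rfl fun i hi => setIntegral_Ioi_zero_indicator_Ico (ha i hi) (hab i hi)

end LayerCake

lemma Fin.exists_forall_iff_succ_le_of_monotone {Q : Fin (k + 1) → Prop} (hQ : Monotone Q)
    (h0 : ¬ Q 0) (hlast : Q (Fin.last k)) : ∃ i : Fin k, ∀ t, Q t ↔ i.succ ≤ t := by
  set S := univ.filter Q
  have hS : S.Nonempty := ⟨Fin.last k, by simpa [S]⟩
  have hmin : ∀ t, Q t ↔ S.min' hS ≤ t := fun t =>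
    ⟨fun ht => S.min'_le t (by simpa [S]), fun ht => hQ ht (by simpa [S] using S.min'_mem hS)⟩
  obtain ⟨i, hi⟩ := Fin.exists_succ_eq.mpr fun h => h0 ((hmin 0).mpr h.le)
  exact ⟨i, hi ▸ hmin⟩

lemma badCard_eq_card_filter_mem_Ico (d : X → X → ℝ) (s : ℝ) :
    badCard d s =
      #{p ∈ univ.filter (fun p : X × X × X => p.1 ≠ p.2.1 ∧ p.2.1 ≠ p.2.2 ∧ p.1 ≠ p.2.2) |
        s ∈ Set.Ico (median (d p.1 p.2.1) (d p.2.1 p.2.2) (d p.2.2 p.1))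
          (max (d p.1 p.2.1) (max (d p.2.1 p.2.2) (d p.2.2 p.1)))} := by
  rw [badCard, filter_filter]
  simp only [and_assoc, two_of_three_le_iff_mem_Ico]

lemma integrableOn_badCard (d : X → X → ℝ) :
    IntegrableOn (fun s => (badCard d s : ℝ)) (Set.Ioi 0) := by
  simp only [badCard_eq_card_filter_mem_Ico]
  exact integrableOn_card_filter_mem_Ico _ _ _ _

lemma integral_badCard_eq_sum_tp {d : X → X → ℝ} (hsym : ∀ x y, d x y = d y x)
    (hnn : ∀ x y, 0 ≤ d x y) :
    ∫ s in Set.Ioi 0, (badCard d s : ℝ) =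
      ∑ x : X, ∑ y : X, ∑ z : X, if x ≠ y ∧ y ≠ z ∧ x ≠ z then tp d x y z else 0 := by
  simp only [badCard_eq_card_filter_mem_Ico]
  rw [integral_card_filter_mem_Ico _ _ _ (fun p _ => median_nonneg _ (hnn _ _) (hnn _ _))
    (fun p _ => median_le_max _ _ _), sum_filter]
  simp only [Fintype.sum_prod_type, tp_eq_max_sub_median hsym]

section SortedEnumeration

variable {α : Type*} {d : α → α → ℝ} {e : Fin k → α × α}

lemma lt_tIdx_iff (hsorted : ∀ i j : Fin k, i ≤ j → d (e i).1 (e i).2 ≤ d (e j).1 (e j).2)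
    (s : ℝ) (j : Fin k) : (j : ℕ) < tIdx d e s ↔ d (e j).1 (e j).2 ≤ s := by
  set F := univ.filter fun i : Fin k => d (e i).1 (e i).2 ≤ s
  change (j : ℕ) < #F ↔ _
  constructor
  · intro hj
    by_contra hjs
    have hF : F ⊆ Iio j := fun i hi => by
      simp only [F, mem_filter, mem_univ, true_and] at hi
      exact mem_Iio.mpr (lt_of_not_ge fun hji => hjs ((hsorted j i hji).trans hi))
    have := card_le_card hF
    rw [Fin.card_Iio] at this
    omega
  · intro hjs
    have hF : Iic j ⊆ F := fun i hi => by
      simpa [F] using (hsorted i j (mem_Iic.mp hi)).trans hjs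
    have := card_le_card hF
    rw [Fin.card_Iic] at this
    omega

lemma inE_tIdx_iff (hsym : ∀ x y, d x y = d y x)
    (henum : ∀ x y : α, x ≠ y → ∃ i : Fin k, e i = (x, y) ∨ e i = (y, x))
    (hsorted : ∀ i j : Fin k, i ≤ j → d (e i).1 (e i).2 ≤ d (e j).1 (e j).2)
    (s : ℝ) {x y : α} (hxy : x ≠ y) : inE e (tIdx d e s) x y ↔ d x y ≤ s := by
  have hd : ∀ i, e i = (x, y) ∨ e i = (y, x) → d (e i).1 (e i).2 = d x y := by
    rintro i (h | h) <;> simp [h, hsym y x]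
  constructor
  · rintro ⟨i, hi, hixy⟩
    exact hd i hixy ▸ (lt_tIdx_iff hsorted s i).mp hi
  · intro hs
    obtain ⟨i, hixy⟩ := henum x y hxy
    exact ⟨i, (lt_tIdx_iff hsorted s i).mpr (hd i hixy ▸ hs), hixy⟩

end SortedEnumeration

section Counting

variable {d : X → X → ℝ} {e : Fin k → X × X} {t : ℕ} {s : ℝ}

lemma badCardE_eq_badCard (hE : ∀ x y, x ≠ y → (inE e t x y ↔ d x y ≤ s)) :
    badCardE e t = badCard d s := by
  unfold badCardE badCard
  congr 1
  refine filter_congr fun p _ => and_congr_right fun h₁ => and_congr_right fun h₂ =>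
    and_congr_right fun h₃ => ?_
  rw [hE _ _ h₁, hE _ _ h₂, hE _ _ (Ne.symm h₃)]

variable {Q : X → X → Prop} {dU : X → X → ℝ}

lemma disCard_eq_card_filter_mem_Ico (hE : ∀ x y, x ≠ y → (inE e t x y ↔ d x y ≤ s))
    (hQ : ∀ x y, x ≠ y → (Q x y ↔ dU x y ≤ s)) :
    disCard e Q t = #{p ∈ univ.filter (fun p : X × X => p.1 ≠ p.2) |
      s ∈ Set.Ico (min (d p.1 p.2) (dU p.1 p.2)) (max (d p.1 p.2) (dU p.1 p.2))} := by
  rw [disCard, filter_filter]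
  congr 1
  refine filter_congr fun p _ => ?_
  exact and_congr_right fun h => by rw [hE _ _ h, hQ _ _ h, le_xor_le_iff_mem_Ico]

end Counting

section Hierarchy

variable {α : Type*} {d : α → α → ℝ} {e : Fin k → α × α} {P : Fin (k + 1) → α → α → Prop}
  {dU : α → α → ℝ}

lemma exists_merge_index (hzero : ∀ x y, P 0 x y → x = y)
    (hhier : ∀ t : Fin k, ∀ x y, P t.castSucc x y → P t.succ x y)
    (hlast : ∀ x y, P (Fin.last k) x y)
    (hdU : ∀ x y, x ≠ y → ∀ i : Fin k,
      P i.succ x y → ¬ P i.castSucc x y → dU x y = d (e i).1 (e i).2)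
    {x y : α} (hxy : x ≠ y) :
    ∃ i : Fin k, (∀ t, P t x y ↔ i.succ ≤ t) ∧ dU x y = d (e i).1 (e i).2 := by
  obtain ⟨i, hi⟩ := Fin.exists_forall_iff_succ_le_of_monotone (Q := fun t => P t x y)
    (Fin.monotone_iff_le_succ.2 fun t => hhier t x y) (fun h => hxy (hzero x y h)) (hlast x y)
  exact ⟨i, hi, hdU x y hxy i ((hi _).2 le_rfl)
    fun h => (Fin.castSucc_lt_succ (i := i)).not_ge ((hi _).1 h)⟩

lemma rel_tIdx_iff (hsorted : ∀ i j : Fin k, i ≤ j → d (e i).1 (e i).2 ≤ d (e j).1 (e j).2)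
    (hzero : ∀ x y, P 0 x y → x = y)
    (hhier : ∀ t : Fin k, ∀ x y, P t.castSucc x y → P t.succ x y)
    (hlast : ∀ x y, P (Fin.last k) x y)
    (hdU : ∀ x y, x ≠ y → ∀ i : Fin k,
      P i.succ x y → ¬ P i.castSucc x y → dU x y = d (e i).1 (e i).2)
    (s : ℝ) {x y : α} (hxy : x ≠ y) : P (tIdx d e s) x y ↔ dU x y ≤ s := by
  obtain ⟨i, hi, hdUi⟩ := exists_merge_index hzero hhier hlast hdU hxy
  rw [hi, hdUi, ← lt_tIdx_iff hsorted, ← Fin.castSucc_lt_iff_succ_le, Fin.lt_def,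
    Fin.val_castSucc]

lemma dU_nonneg (hnn : ∀ x y, 0 ≤ d x y) (hdUdiag : ∀ x, dU x x = 0)
    (hzero : ∀ x y, P 0 x y → x = y)
    (hhier : ∀ t : Fin k, ∀ x y, P t.castSucc x y → P t.succ x y)
    (hlast : ∀ x y, P (Fin.last k) x y)
    (hdU : ∀ x y, x ≠ y → ∀ i : Fin k,
      P i.succ x y → ¬ P i.castSucc x y → dU x y = d (e i).1 (e i).2)
    (x y : α) : 0 ≤ dU x y := by
  obtain rfl | hxy := eq_or_ne x y
  · exact (hdUdiag x).ge
  · obtain ⟨i, -, hdUi⟩ := exists_merge_index hzero hhier hlast hdU hxy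
    exact hdUi ▸ hnn _ _

end Hierarchy

section DisagreementIntegral

variable {d : X → X → ℝ} {e : Fin k → X × X} {τ : ℝ → ℕ} {Q : ℝ → X → X → Prop}
  {dU : X → X → ℝ}

lemma integrableOn_disCard (hE : ∀ s x y, x ≠ y → (inE e (τ s) x y ↔ d x y ≤ s))
    (hQ : ∀ s x y, x ≠ y → (Q s x y ↔ dU x y ≤ s)) :
    IntegrableOn (fun s => (disCard e (Q s) (τ s) : ℝ)) (Set.Ioi 0) := by
  have h := fun s => disCard_eq_card_filter_mem_Ico (hE s) (hQ s)
  simp only [h]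
  exact integrableOn_card_filter_mem_Ico _ _ _ _

lemma integral_disCard_eq_sum_abs_sub (hnn : ∀ x y, 0 ≤ d x y) (hdiag : ∀ x, d x x = 0)
    (hdUnn : ∀ x y, 0 ≤ dU x y) (hdUdiag : ∀ x, dU x x = 0)
    (hE : ∀ s x y, x ≠ y → (inE e (τ s) x y ↔ d x y ≤ s))
    (hQ : ∀ s x y, x ≠ y → (Q s x y ↔ dU x y ≤ s)) :
    ∫ s in Set.Ioi 0, (disCard e (Q s) (τ s) : ℝ) = ∑ x : X, ∑ y : X, |d x y - dU x y| := by
  have h := fun s => disCard_eq_card_filter_mem_Ico (hE s) (hQ s)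
  simp only [h]
  rw [integral_card_filter_mem_Ico _ _ _ (fun p _ => le_min (hnn _ _) (hdUnn _ _))
    (fun p _ => min_le_max), sum_filter, Fintype.sum_prod_type]
  refine sum_congr rfl fun x _ => sum_congr rfl fun y _ => ?_
  obtain rfl | hxy := eq_or_ne x y
  · simp [hdiag, hdUdiag]
  · rw [if_pos hxy, max_sub_min_eq_abs, abs_sub_comm]

end DisagreementIntegral

/-- Pairs are counted as ordered pairs (a factor 2) and triangles as ordered triples
(a factor 6), whence the coefficients `3 * _ ≤ 4 * _`. -/
theorem hcc_ultrafit_l1_bound_general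
    (d : X → X → ℝ) (hsym : ∀ x y, d x y = d y x) (hnn : ∀ x y, 0 ≤ d x y)
    (hdiag : ∀ x, d x x = 0)
    (e : Fin k → X × X)
    (henum : ∀ x y : X, x ≠ y → ∃! i : Fin k, e i = (x, y) ∨ e i = (y, x))
    (hsorted : ∀ i j : Fin k, i ≤ j → d (e i).1 (e i).2 ≤ d (e j).1 (e j).2)
    (P : Fin (k + 1) → X → X → Prop)
    (hzero : ∀ x y, P 0 x y ↔ x = y)
    (hhier : ∀ t : Fin k, ∀ x y, P t.castSucc x y → P t.succ x y)
    (hlast : ∀ x y, P (Fin.last k) x y)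
    (hdis : ∀ t : Fin (k + 1), 3 * disCard e (P t) (t : ℕ) ≤ 4 * badCardE e (t : ℕ))
    (dU : X → X → ℝ) (hdUdiag : ∀ x, dU x x = 0)
    (hdU : ∀ x y, x ≠ y → ∀ i : Fin k,
      P i.succ x y → ¬ P i.castSucc x y → dU x y = d (e i).1 (e i).2) :
    ((∑ x : X, ∑ y : X, |d x y - dU x y|) =
        ∫ s in Set.Ioi (0 : ℝ), (disCard e (P (tIdx d e s)) ((tIdx d e s : ℕ)) : ℝ)) ∧
    (3 * ∫ s in Set.Ioi (0 : ℝ), (disCard e (P (tIdx d e s)) ((tIdx d e s : ℕ)) : ℝ)) ≤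
        4 * ∫ s in Set.Ioi (0 : ℝ), (badCard d s : ℝ) ∧
    ((∫ s in Set.Ioi (0 : ℝ), (badCard d s : ℝ)) =
        ∑ x : X, ∑ y : X, ∑ z : X, if x ≠ y ∧ y ≠ z ∧ x ≠ z then tp d x y z else 0) := by
  have hzero' : ∀ x y, P 0 x y → x = y := fun x y => (hzero x y).1
  have hE : ∀ s x y, x ≠ y → (inE e (tIdx d e s) x y ↔ d x y ≤ s) := fun s x y =>
    inE_tIdx_iff hsym (fun x y hxy => (henum x y hxy).exists) hsorted s
  have hP : ∀ s x y, x ≠ y → (P (tIdx d e s) x y ↔ dU x y ≤ s) := fun s x y =>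
    rel_tIdx_iff hsorted hzero' hhier hlast hdU s
  have hdUnn := dU_nonneg hnn hdUdiag hzero' hhier hlast hdU
  have hpointwise : ∀ s, (3 : ℝ) * disCard e (P (tIdx d e s)) (tIdx d e s) ≤ 4 * badCard d s :=
    fun s => by exact_mod_cast badCardE_eq_badCard (hE s) ▸ hdis (tIdx d e s)
  refine ⟨(integral_disCard_eq_sum_abs_sub hnn hdiag hdUnn hdUdiag hE hP).symm, ?_,
    integral_badCard_eq_sum_tp hsym hnn⟩
  rw [← integral_const_mul, ← integral_const_mul]
  exact integral_mono ((integrableOn_disCard hE hP).const_mul 3)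
    ((integrableOn_badCard d).const_mul 4) hpointwise

/-- If a hierarchical family of partitions `{P_t}` over the sorted pair sequence `e` satisfies
`|E_t Δ E(P_t)| ≤ 4 |B(G_t)|` for all `t`, then the ultrametric `d_U` read off from the
merging times satisfies
`‖d - d_U‖₁ = ∫_0^∞ |E_s Δ E(P_s)| ds ≤ 4 ∫_0^∞ |B(G_s)| ds = 4 Σ_{triples} tp(d;x,y,z)`.
(Pairs are counted as ordered pairs — a factor 2 on both sides of the equalities — and
triangles as ordered triples — a factor 6 — whence the coefficients `3 ⬝ ≤ 4 ⬝`.) -/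
theorem hcc_ultrafit_l1_bound
    (d : X → X → ℝ) (hsym : ∀ x y, d x y = d y x) (hnn : ∀ x y, 0 ≤ d x y)
    (hdiag : ∀ x, d x x = 0)
    (e : Fin k → X × X) (hnedge : ∀ i, (e i).1 ≠ (e i).2)
    (henum : ∀ x y : X, x ≠ y → ∃! i : Fin k, e i = (x, y) ∨ e i = (y, x))
    (hsorted : ∀ i j : Fin k, i ≤ j → d (e i).1 (e i).2 ≤ d (e j).1 (e j).2)
    (P : Fin (k + 1) → X → X → Prop)
    (hequiv : ∀ t, Equivalence (P t))
    (hzero : ∀ x y, P 0 x y ↔ x = y)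
    (hhier : ∀ t : Fin k, ∀ x y, P t.castSucc x y → P t.succ x y)
    (hlast : ∀ x y, P (Fin.last k) x y)
    (hdis : ∀ t : Fin (k + 1), 3 * disCard e (P t) (t : ℕ) ≤ 4 * badCardE e (t : ℕ))
    (dU : X → X → ℝ) (hdUdiag : ∀ x, dU x x = 0)
    (hdU : ∀ x y, x ≠ y → ∀ i : Fin k,
      P i.succ x y → ¬ P i.castSucc x y → dU x y = d (e i).1 (e i).2) :
    ((∑ x : X, ∑ y : X, |d x y - dU x y|) =
        ∫ s in Set.Ioi (0 : ℝ), (disCard e (P (tIdx d e s)) ((tIdx d e s : ℕ)) : ℝ)) ∧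
    (3 * ∫ s in Set.Ioi (0 : ℝ), (disCard e (P (tIdx d e s)) ((tIdx d e s : ℕ)) : ℝ)) ≤
        4 * ∫ s in Set.Ioi (0 : ℝ), (badCard d s : ℝ) ∧
    ((∫ s in Set.Ioi (0 : ℝ), (badCard d s : ℝ)) =
        ∑ x : X, ∑ y : X, ∑ z : X, if x ≠ y ∧ y ≠ z ∧ x ≠ z then tp d x y z else 0) :=
  hcc_ultrafit_l1_bound_general d hsym hnn hdiag e henum hsorted P hzero hhier hlast hdis dU hdUdiag
    hdU
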